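/- arXiv:0903.4237 — 2 statements merged into one kernel-verified Lean document; each statement's English description precedes it below -/
import Mathlib

section
/- Let k ≥ 2 and let a, b, c be nonnegative integers. Let S be the multiset consisting of 2^k − 3 copies of a and one copy each of b and c. Then S is realized by some F_2-linear map between binary linear codes if and only if a, b, c ≡ 0 (mod 2^{k−2}) and either exactly 1 or exactly 3 of a, b, c are congruent to 0 (mod 2^{k−1}). -/
open Matrix

noncomputable section

instance instFiniteProjectivization (K V : Type*) [DivisionRing K] [AddCommGroup V] [Module K V]
    [Finite V] : Finite (Projectivization K V) :=
  Quotient.finite _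

noncomputable instance instFintypeProjectivization (K V : Type*) [DivisionRing K] [AddCommGroup V]
    [Module K V] [Finite V] : Fintype (Projectivization K V) :=
  Fintype.ofFinite _

noncomputable instance instDecEqProjectivization (K V : Type*) [DivisionRing K] [AddCommGroup V]
    [Module K V] : DecidableEq (Projectivization K V) :=
  Classical.decEq _

/-- The projective multiset of weight changes of a linear map between linear codes
`U ⊆ F^n` and `V ⊆ F^m`: the multiset `{w(u) - w(φ(u)) : u ∈ P(U)}`. -/
def projWeightChanges {F : Type} [Field F] [Fintype F] [DecidableEq F] {n m : ℕ}
    {U : Submodule F (Fin n → F)} {V : Submodule F (Fin m → F)} (φ : U →ₗ[F] V) : Multiset ℤ :=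
  (Finset.univ : Finset (Projectivization F U)).val.map
    fun p => (hammingNorm (p.rep : Fin n → F) : ℤ) - (hammingNorm ((φ p.rep : V) : Fin m → F) : ℤ)

/-- S is realized by some F-linear map between linear codes. -/
def Realizes (F : Type) [Field F] [Fintype F] [DecidableEq F] (S : Multiset ℤ) : Prop :=
  ∃ (n m : ℕ) (U : Submodule F (Fin n → F)) (V : Submodule F (Fin m → F)) (φ : U →ₗ[F] V),
    projWeightChanges φ = S

/-- A coordinate projection up to monomial equivalence: multiplication by a matrix
with at most one nonzero entry in each row and each column. -/
def IsProjection {F : Type} [Field F] [Fintype F] [DecidableEq F] {n m : ℕ}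
    {U : Submodule F (Fin n → F)} {V : Submodule F (Fin m → F)} (φ : U →ₗ[F] V) : Prop :=
  ∃ M : Matrix (Fin m) (Fin n) F,
    (∀ u : U, ((φ u : Fin m → F)) = M.mulVec (u : Fin n → F)) ∧
    (∀ i j j', M i j ≠ 0 → M i j' ≠ 0 → j = j') ∧
    (∀ i i' j, M i j ≠ 0 → M i' j ≠ 0 → i = i')

/-- A monomial equivalence: multiplication by an n × n matrix with exactly one
nonzero entry in each row and each column. -/
def IsMonomialEquiv {F : Type} [Field F] [Fintype F] [DecidableEq F] {n : ℕ}
    {U V : Submodule F (Fin n → F)} (φ : U →ₗ[F] V) : Prop :=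
  ∃ M : Matrix (Fin n) (Fin n) F,
    (∀ u : U, ((φ u : Fin n → F)) = M.mulVec (u : Fin n → F)) ∧
    (∀ i, ∃! j, M i j ≠ 0) ∧
    (∀ j, ∃! i, M i j ≠ 0)

/-- S is q-projection-forcing: every linear map over a field of order q realizing S
is a projection. -/
def ProjectionForcing (q : ℕ) (S : Multiset ℤ) : Prop :=
  ∀ (F : Type) [Field F] [Fintype F] [DecidableEq F], Fintype.card F = q →
    ∀ (n m : ℕ) (U : Submodule F (Fin n → F)) (V : Submodule F (Fin m → F))
      (φ : U →ₗ[F] V), projWeightChanges φ = S → IsProjection φ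

/-- The matrix M_{k,q}: rows and columns indexed by points of PG(k-1,q), with (v,w)
entry 0 if v ⬝ w = 0 and 1 otherwise. -/
def Mkq (F : Type) [Field F] [Fintype F] [DecidableEq F] (k : ℕ) :
    Matrix (Projectivization F (Fin k → F)) (Projectivization F (Fin k → F)) ℝ :=
  Matrix.of fun v w => if dotProduct v.rep w.rep = 0 then (0 : ℝ) else 1

/-- The q-ary split difference of a multiset S. -/
def splitDiff (q k : ℕ) (S : Multiset ℤ) : ℤ :=
  (((S.sort (· ≤ ·)).take (q ^ (k - 1))).sum) -
    ((q : ℤ) - 1) * (((S.sort (· ≤ ·)).drop (q ^ (k - 1))).sum)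

end

/-!
Write `g u = w(u) - w(φ u)` on the domain code `U`, so `|U| = 2^k`. Each coordinate of either
code restricts to a linear functional `ψ` on `U`, so `g` is an integer combination of the
indicators `ind ∘ ψ`, and the Walsh coefficient of `ind ∘ ψ` at any `h ≠ 0` is `|U|/2` or `0`.
Hence `2^(k-1)` divides every Walsh coefficient of `g`. If `g p = b`, `g q = c` and `g = a` at
the other nonzero vectors, the coefficient at `h ≠ 0` is
`a + (b - a) sgn (h p) + (c - a) sgn (h q)`, and functionals with `(h p, h q)` equal to
`(1,0), (0,1), (1,1)` give `2^(k-1) ∣ a + b - c, a - b + c, b + c - a`. These three congruences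
force `2^(k-2) ∣ a, b, c` and then say that the sum of the quotients is even, which is the parity
condition of the statement.

Conversely, if `2^(k-1)` divides all Walsh coefficients of a function `g` on `F₂^k` with `g 0 = 0`,
Fourier inversion writes `g` as an integer combination of the indicators `u ↦ ind (f ⬝ u)`. After
adding a large constant to all coefficients, this is the difference of the weight functions of
two codes whose generator matrices repeat each row `f` the corresponding number of times.
-/

open Finset Function

def ind (x : ZMod 2) : ℤ := if x = 0 then 0 else 1

def sgn (x : ZMod 2) : ℤ := 2 * ind x - 1

@[simp] lemma sgn_zero : sgn 0 = -1 := rfl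

@[simp] lemma sgn_one : sgn 1 = 1 := rfl

lemma zmod_two_eq_zero_or_one (x : ZMod 2) : x = 0 ∨ x = 1 := by revert x; decide

lemma ind_add_one (x : ZMod 2) : ind (x + 1) = 1 - ind x := by revert x; decide

lemma sgn_mul_ind (x y : ZMod 2) : sgn x * ind y = ind x - ind (x + y) := by
  revert x y; decide

lemma hammingNorm_eq_sum_ind {ι : Type*} [Fintype ι] (x : ι → ZMod 2) :
    (hammingNorm x : ℤ) = ∑ i, ind (x i) := by
  simp [hammingNorm, ind, Finset.card_filter]

section Walsh

variable {V : Type*} [AddCommGroup V] [Module (ZMod 2) V] [Fintype V]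

/-- The Walsh coefficient of `g` at `h`, with `sgn = -(-1)^·` in place of the character. -/
def walsh (g : V → ℤ) (h : V →ₗ[ZMod 2] ZMod 2) : ℤ := ∑ v, sgn (h v) * g v

lemma two_mul_sum_ind (f : V →ₗ[ZMod 2] ZMod 2) :
    2 * ∑ v, ind (f v) = if f = 0 then 0 else (Fintype.card V : ℤ) := by
  split_ifs with hf
  · simp [hf, ind]
  obtain ⟨v₀, hv₀⟩ : ∃ v₀, f v₀ = 1 := by
    obtain ⟨v, hv⟩ := not_forall.mp fun h => hf (LinearMap.ext h)
    exact ⟨v, (zmod_two_eq_zero_or_one _).resolve_left hv⟩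
  have htrans : ∑ v, ind (f v) = ∑ v, (1 - ind (f v)) := by
    rw [← Equiv.sum_comp (Equiv.addRight v₀) (fun v => ind (f v))]
    simp only [Equiv.coe_addRight, map_add, hv₀, ind_add_one]
  simp only [sum_sub_distrib, sum_const, card_univ, nsmul_eq_mul, mul_one] at htrans
  linarith

lemma sum_sgn {h : V →ₗ[ZMod 2] ZMod 2} (hh : h ≠ 0) : ∑ v, sgn (h v) = 0 := by
  have := two_mul_sum_ind h
  simp only [sgn, sum_sub_distrib, ← mul_sum, if_neg hh, sum_const, card_univ] at this ⊢
  simp [this]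

lemma two_mul_walsh_ind (h ψ : V →ₗ[ZMod 2] ZMod 2) :
    2 * walsh (ind ∘ ψ) h =
      (if h = 0 then 0 else (Fintype.card V : ℤ)) -
        if h + ψ = 0 then 0 else (Fintype.card V : ℤ) := by
  simp only [walsh, Function.comp_apply, sgn_mul_ind, sum_sub_distrib, mul_sub, ← two_mul_sum_ind,
    LinearMap.add_apply]

lemma card_dvd_two_mul_walsh_ind (h ψ : V →ₗ[ZMod 2] ZMod 2) :
    (Fintype.card V : ℤ) ∣ 2 * walsh (ind ∘ ψ) h := by
  rw [two_mul_walsh_ind]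
  exact dvd_sub (by split_ifs <;> simp) (by split_ifs <;> simp)

lemma two_mul_walsh_ind_of_ne_zero {h : V →ₗ[ZMod 2] ZMod 2} (hh : h ≠ 0)
    (ψ : V →ₗ[ZMod 2] ZMod 2) :
    2 * walsh (ind ∘ ψ) h = if ψ = h then (Fintype.card V : ℤ) else 0 := by
  have : h + ψ = 0 ↔ ψ = h := by
    rw [add_eq_zero_iff_eq_neg, ZModModule.neg_eq_self, eq_comm]
  rw [two_mul_walsh_ind, if_neg hh]
  split_ifs <;> simp_all

lemma walsh_eq_sgn_combination {g : V → ℤ} {p q : V} {a b c : ℤ} (hp : p ≠ 0) (hq : q ≠ 0)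
    (hpq : p ≠ q) (hg0 : g 0 = 0) (hgp : g p = b) (hgq : g q = c)
    (hga : ∀ v, v ≠ 0 → v ≠ p → v ≠ q → g v = a) {h : V →ₗ[ZMod 2] ZMod 2} (hh : h ≠ 0) :
    walsh g h = a + (b - a) * sgn (h p) + (c - a) * sgn (h q) := by
  classical
  calc walsh g h = ∑ v, sgn (h v) * (g v - a) + a * ∑ v, sgn (h v) := by
        rw [walsh, mul_sum, ← sum_add_distrib]; ring_nf
    _ = ∑ v ∈ {0, p, q}, sgn (h v) * (g v - a) := by
        rw [sum_sgn hh, mul_zero, add_zero]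
        refine (sum_subset (subset_univ _) fun v _ hv => ?_).symm
        simp only [mem_insert, mem_singleton, not_or] at hv
        rw [hga v hv.1 hv.2.1 hv.2.2, sub_self, mul_zero]
    _ = a + (b - a) * sgn (h p) + (c - a) * sgn (h q) := by
        rw [sum_insert (by simp [hp.symm, hq.symm]), sum_insert (by simpa using hpq),
          sum_singleton, map_zero, hg0, hgp, hgq, sgn_zero]
        ring

end Walsh

section Functionals

variable {V : Type*} [AddCommGroup V] [Module (ZMod 2) V]

lemma linearIndependent_pair_zmod_two {x y : V} (hx : x ≠ 0) (hy : y ≠ 0) (hxy : x ≠ y) :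
    LinearIndependent (ZMod 2) ![x, y] := by
  rw [LinearIndependent.pair_iff]
  intro s t hst
  rcases zmod_two_eq_zero_or_one s with rfl | rfl <;>
    rcases zmod_two_eq_zero_or_one t with rfl | rfl <;>
    simp_all [add_eq_zero_iff_eq_neg, ZModModule.neg_eq_self]

lemma exists_dual_apply_eq_one {x y : V} (hx : x ≠ 0) (hy : y ≠ 0) (hxy : x ≠ y) :
    ∃ h : V →ₗ[ZMod 2] ZMod 2, h x = 1 ∧ h y = 1 := by
  obtain ⟨h, hh⟩ := Module.exists_dual_forall_apply_eq_one
    ((linearIndependent_pair_zmod_two hx hy hxy).linearIndepOn Set.univ)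
  exact ⟨h, hh 0 trivial, hh 1 trivial⟩

lemma forall_dvd_sgn_combination_iff {N a b c : ℤ} {p q : V} (hp : p ≠ 0) (hq : q ≠ 0)
    (hpq : p ≠ q) :
    (∀ h : V →ₗ[ZMod 2] ZMod 2, h ≠ 0 → N ∣ a + (b - a) * sgn (h p) + (c - a) * sgn (h q)) ↔
      N ∣ a + b - c ∧ N ∣ a - b + c ∧ N ∣ b + c - a := by
  constructor
  · intro hN
    have hpq0 : p + q ≠ 0 := by rwa [Ne, add_eq_zero_iff_eq_neg, ZModModule.neg_eq_self]
    have hne {h : V →ₗ[ZMod 2] ZMod 2} {x : V} (hx : h x = 1) : h ≠ 0 := by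
      rintro rfl; exact zero_ne_one hx
    obtain ⟨h₁, h₁p, h₁pq⟩ := exists_dual_apply_eq_one hp hpq0 (by simpa [eq_comm] using hq)
    obtain ⟨h₂, h₂q, h₂pq⟩ := exists_dual_apply_eq_one hq hpq0 (by simpa [eq_comm] using hp)
    obtain ⟨h₃, h₃p, h₃q⟩ := exists_dual_apply_eq_one hp hq hpq
    have h₁q : h₁ q = 0 := by simpa [h₁p] using h₁pq
    have h₂p : h₂ p = 0 := by simpa [h₂q] using h₂pq
    refine ⟨?_, ?_, ?_⟩
    · convert hN h₁ (hne h₁p) using 1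
      simp only [h₁p, h₁q, sgn_zero, sgn_one]
      ring
    · convert hN h₂ (hne h₂q) using 1
      simp only [h₂p, h₂q, sgn_zero, sgn_one]
      ring
    · convert hN h₃ (hne h₃p) using 1
      simp only [h₃p, h₃q, sgn_one]
      ring
  · rintro ⟨h₁, h₂, h₃⟩ h -
    rcases zmod_two_eq_zero_or_one (h p) with hp' | hp' <;>
      rcases zmod_two_eq_zero_or_one (h q) with hq' | hq' <;>
      simp only [hp', hq', sgn_zero, sgn_one]
    · convert Int.dvd_sub (Int.dvd_add h₁ h₂) h₃ using 1; ring
    · convert h₂ using 1; ring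
    · convert h₁ using 1; ring
    · convert h₃ using 1; ring

end Functionals

section Multisets

variable {α : Type*} [DecidableEq α] {s : Finset α} {g : α → ℤ} {N : ℕ} {a b c : ℤ}

lemma replicate_add_pair (N : ℕ) (a b c : ℤ) :
    Multiset.replicate N a + {b, c} = b ::ₘ c ::ₘ Multiset.replicate N a := by
  rw [add_comm]; rfl

lemma exists_of_map_eq_replicate_add_pair (h : s.val.map g = Multiset.replicate N a + {b, c}) :
    ∃ p ∈ s, ∃ q ∈ s, p ≠ q ∧ g p = b ∧ g q = c ∧ ∀ r ∈ s, r ≠ p → r ≠ q → g r = a := by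
  rw [replicate_add_pair] at h
  obtain ⟨p, hp, hgp, h⟩ := (Multiset.map_eq_cons _ _ _ _).mpr h
  obtain ⟨q, hq, hgq, h⟩ := (Multiset.map_eq_cons _ _ _ _).mpr h
  rw [s.nodup.mem_erase_iff] at hq
  refine ⟨p, hp, q, hq.2, hq.1.symm, hgp, hgq, fun r hr hrp hrq => ?_⟩
  refine Multiset.eq_of_mem_replicate (h ▸ Multiset.mem_map_of_mem g ?_)
  exact (Multiset.mem_erase_of_ne hrq).mpr ((Multiset.mem_erase_of_ne hrp).mpr hr)

lemma map_eq_replicate_add_pair {p q : α} (hp : p ∈ s) (hq : q ∈ s) (hpq : p ≠ q)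
    (hgp : g p = b) (hgq : g q = c) (hga : ∀ r ∈ s, r ≠ p → r ≠ q → g r = a) :
    s.val.map g = Multiset.replicate (s.card - 2) a + {b, c} := by
  have hq' : q ∈ s.val.erase p := (Multiset.mem_erase_of_ne hpq.symm).mpr hq
  have hs : s.val = p ::ₘ q ::ₘ (s.val.erase p).erase q := by
    rw [Multiset.cons_erase hq', Multiset.cons_erase hp]
  have hrest : ((s.val.erase p).erase q).map g = Multiset.replicate (s.card - 2) a := by
    rw [Multiset.eq_replicate]
    refine ⟨?_, ?_⟩
    · simp only [Multiset.card_map, Multiset.card_erase_of_mem hq', Multiset.card_erase_of_mem hp,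
        card_val, Nat.pred_eq_sub_one, Nat.sub_sub]
    simp only [Multiset.mem_map]
    rintro _ ⟨r, hr, rfl⟩
    rw [(s.nodup.erase p).mem_erase_iff, s.nodup.mem_erase_iff] at hr
    exact hga r hr.2.2 hr.2.1 hr.1
  rw [replicate_add_pair, hs, Multiset.map_cons, Multiset.map_cons, hgp, hgq, hrest]

end Multisets

section Projectivization

variable {V : Type*} [AddCommGroup V]

lemma Projectivization.rep_injective {K : Type*} [DivisionRing K] [Module K V] :
    Injective (Projectivization.rep : Projectivization K V → V) :=
  fun p q h => by rw [← p.mk_rep, ← q.mk_rep]; simp_rw [h]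

variable [Module (ZMod 2) V]

lemma Projectivization.rep_mk_zmod_two (v : V) (hv : v ≠ 0) :
    (Projectivization.mk (ZMod 2) v hv).rep = v := by
  obtain ⟨u, hu⟩ := Projectivization.exists_smul_eq_mk_rep (ZMod 2) v hv
  rw [← hu, Subsingleton.elim u 1, one_smul]

lemma Projectivization.map_rep_univ_zmod_two [Fintype V] [DecidableEq V] :
    (univ : Finset (Projectivization (ZMod 2) V)).map
      ⟨Projectivization.rep, Projectivization.rep_injective⟩ = univ.erase 0 := by
  ext v
  simp only [mem_map, mem_univ, true_and, mem_erase, and_true]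
  exact ⟨fun ⟨p, hp⟩ => hp ▸ p.rep_nonzero, fun hv => ⟨_, Projectivization.rep_mk_zmod_two v hv⟩⟩

lemma map_erase_zero_linearEquiv {W : Type*} [AddCommGroup W] [Module (ZMod 2) W]
    [Fintype W] [Fintype V] [DecidableEq W] [DecidableEq V]
    (e : W ≃ₗ[ZMod 2] V) (g : V → ℤ) :
    (univ.erase 0 : Finset V).val.map g = (univ.erase 0 : Finset W).val.map (g ∘ e) := by
  have : (univ.erase 0 : Finset W).map e.toEquiv.toEmbedding = univ.erase 0 := by
    rw [map_erase, univ_map_equiv_to_embedding]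
    simp
  rw [← this, map_val, Multiset.map_map]
  rfl

end Projectivization

section WeightChange

variable {F : Type} [Field F] [DecidableEq F] {n m : ℕ}

def weightChange {U : Submodule F (Fin n → F)} {V : Submodule F (Fin m → F)} (φ : U →ₗ[F] V)
    (u : U) : ℤ :=
  hammingNorm (u : Fin n → F) - hammingNorm ((φ u : V) : Fin m → F)

variable {U : Submodule (ZMod 2) (Fin n → ZMod 2)} {V : Submodule (ZMod 2) (Fin m → ZMod 2)}
  [Fintype U]

lemma projWeightChanges_eq_map_weightChange (φ : U →ₗ[ZMod 2] V) :
    projWeightChanges φ = (univ.erase 0 : Finset U).val.map (weightChange φ) := by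
  rw [← Projectivization.map_rep_univ_zmod_two, map_val, Multiset.map_map]
  rfl

lemma card_dvd_two_mul_walsh_weightChange (φ : U →ₗ[ZMod 2] V) (h : U →ₗ[ZMod 2] ZMod 2) :
    (Fintype.card U : ℤ) ∣ 2 * walsh (weightChange φ) h := by
  have hsplit : 2 * walsh (weightChange φ) h =
      ∑ i, 2 * walsh (ind ∘ (LinearMap.proj i ∘ₗ U.subtype)) h -
        ∑ j, 2 * walsh (ind ∘ (LinearMap.proj j ∘ₗ V.subtype ∘ₗ φ)) h := by
    simp only [walsh, weightChange, hammingNorm_eq_sum_ind, mul_sub, mul_sum, sum_sub_distrib]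
    rw [sum_comm (s := univ (α := U)), sum_comm (s := univ (α := U))]
    rfl
  rw [hsplit]
  exact dvd_sub (dvd_sum fun i _ => card_dvd_two_mul_walsh_ind h _)
    (dvd_sum fun j _ => card_dvd_two_mul_walsh_ind h _)

end WeightChange

section Construction

variable {k : ℕ}

lemma realizes_of_injective {n m : ℕ} (G : Matrix (Fin n) (Fin k) (ZMod 2))
    (H : Matrix (Fin m) (Fin k) (ZMod 2)) (hG : Injective G.mulVec) :
    Realizes (ZMod 2) ((univ.erase 0 : Finset (Fin k → ZMod 2)).val.map
      fun u => (hammingNorm (G *ᵥ u) : ℤ) - hammingNorm (H *ᵥ u)) := by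
  let e := LinearEquiv.ofInjective G.mulVecLin hG
  let φ := H.mulVecLin.rangeRestrict ∘ₗ e.symm.toLinearMap
  have : Fintype (LinearMap.range G.mulVecLin) := Fintype.ofFinite _
  have he (u : Fin k → ZMod 2) : (e u : Fin n → ZMod 2) = G *ᵥ u := rfl
  have hφ (u : Fin k → ZMod 2) : (φ (e u) : Fin m → ZMod 2) = H *ᵥ u := by simp [φ]
  refine ⟨n, m, _, _, φ, ?_⟩
  rw [projWeightChanges_eq_map_weightChange, map_erase_zero_linearEquiv e]
  simp only [weightChange, Function.comp_def, he, hφ]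

/-- The rows are the vectors `f`, each repeated `m f` times. -/
noncomputable def repMatrix (m : (Fin k → ZMod 2) → ℕ) :
    Matrix (Fin (Fintype.card (Σ f : Fin k → ZMod 2, Fin (m f)))) (Fin k) (ZMod 2) :=
  Matrix.of fun i => ((Fintype.equivFin (Σ f : Fin k → ZMod 2, Fin (m f))).symm i).1

lemma hammingNorm_repMatrix_mulVec (m : (Fin k → ZMod 2) → ℕ) (u : Fin k → ZMod 2) :
    (hammingNorm (repMatrix m *ᵥ u) : ℤ) = ∑ f, m f * ind (f ⬝ᵥ u) := by
  rw [hammingNorm_eq_sum_ind]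
  let e := Fintype.equivFin (Σ f : Fin k → ZMod 2, Fin (m f))
  change ∑ i, ind ((e.symm i).1 ⬝ᵥ u) = _
  rw [Equiv.sum_comp e.symm (fun s => ind (s.1 ⬝ᵥ u)), Fintype.sum_sigma]
  simp

lemma injective_repMatrix_mulVec {m : (Fin k → ZMod 2) → ℕ} (hm : ∀ f, 0 < m f) :
    Injective (repMatrix m).mulVec := by
  intro u v huv
  have hdot (f : Fin k → ZMod 2) : f ⬝ᵥ u = f ⬝ᵥ v := by
    simpa [repMatrix, mulVec] using
      congrFun huv (Fintype.equivFin (Σ f : Fin k → ZMod 2, Fin (m f)) ⟨f, 0, hm f⟩)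
  rw [← sub_eq_zero]
  refine dotProduct_eq_zero _ fun w => ?_
  rw [sub_dotProduct, dotProduct_comm u, dotProduct_comm v, hdot, sub_self]

lemma sum_two_mul_walsh_mul_ind {g : (Fin k → ZMod 2) → ℤ} (hg0 : g 0 = 0)
    (u : Fin k → ZMod 2) :
    ∑ f, 2 * walsh g (dotProductEquiv (ZMod 2) (Fin k) f) * ind (f ⬝ᵥ u) =
      Fintype.card (Fin k → ZMod 2) * g u := by
  have hortho (v : Fin k → ZMod 2) :
      g v * (2 * walsh (ind ∘ dotProductEquiv (ZMod 2) (Fin k) u)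
        (dotProductEquiv (ZMod 2) (Fin k) v)) =
        if u = v then Fintype.card (Fin k → ZMod 2) * g v else 0 := by
    by_cases hv : v = 0
    · simp [hv, hg0]
    simp only [two_mul_walsh_ind_of_ne_zero (by simpa using hv : dotProductEquiv _ _ v ≠ 0),
      EmbeddingLike.apply_eq_iff_eq]
    split_ifs <;> ring
  calc ∑ f, 2 * walsh g (dotProductEquiv (ZMod 2) (Fin k) f) * ind (f ⬝ᵥ u)
      = ∑ v, g v * (2 * walsh (ind ∘ dotProductEquiv (ZMod 2) (Fin k) u)
          (dotProductEquiv (ZMod 2) (Fin k) v)) := by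
        simp only [walsh, mul_sum, sum_mul, Function.comp_apply, dotProductEquiv_apply_apply]
        rw [sum_comm]
        refine sum_congr rfl fun v _ => sum_congr rfl fun f _ => ?_
        rw [dotProduct_comm v, dotProduct_comm u]
        ring
    _ = Fintype.card (Fin k → ZMod 2) * g u := by simp [hortho]

lemma realizes_of_card_dvd_two_mul_walsh (g : (Fin k → ZMod 2) → ℤ) (hg0 : g 0 = 0)
    (hdvd : ∀ h : (Fin k → ZMod 2) →ₗ[ZMod 2] ZMod 2, h ≠ 0 →
      (Fintype.card (Fin k → ZMod 2) : ℤ) ∣ 2 * walsh g h) :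
    Realizes (ZMod 2) ((univ.erase 0 : Finset (Fin k → ZMod 2)).val.map g) := by
  set N : ℤ := (Fintype.card (Fin k → ZMod 2) : ℤ)
  let D f := 2 * walsh g (dotProductEquiv (ZMod 2) (Fin k) f)
  let c f := D f / N
  have hc (f u : Fin k → ZMod 2) : N * c f * ind (f ⬝ᵥ u) = D f * ind (f ⬝ᵥ u) := by
    by_cases hf : f = 0
    · simp [hf, ind]
    rw [Int.mul_ediv_cancel' (hdvd _ (by simpa using hf))]
  have hinv (u : Fin k → ZMod 2) : ∑ f, c f * ind (f ⬝ᵥ u) = g u := by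
    apply mul_left_cancel₀ (show N ≠ 0 by positivity)
    rw [mul_sum, ← sum_two_mul_walsh_mul_ind hg0 u]
    exact sum_congr rfl fun f _ => by rw [← mul_assoc, hc]
  obtain ⟨M, hM0, hM⟩ : ∃ M : ℤ, 0 ≤ M ∧ ∀ f, 1 ≤ M + c f := by
    refine ⟨1 + ∑ f, |c f|, by positivity, fun f => ?_⟩
    have := single_le_sum (fun f _ => abs_nonneg (c f)) (mem_univ f)
    linarith [neg_abs_le (c f)]
  let mU f := (M + c f).toNat
  let mV (_ : Fin k → ZMod 2) := M.toNat
  have hweight (u : Fin k → ZMod 2) :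
      (hammingNorm (repMatrix mU *ᵥ u) : ℤ) - hammingNorm (repMatrix mV *ᵥ u) = g u := by
    rw [hammingNorm_repMatrix_mulVec, hammingNorm_repMatrix_mulVec, ← sum_sub_distrib, ← hinv]
    refine sum_congr rfl fun f _ => ?_
    have := hM f
    rw [← sub_mul]
    congr 1
    simp only [mU, mV]
    omega
  have hU := realizes_of_injective (repMatrix mU) (repMatrix mV)
    (injective_repMatrix_mulVec fun f => by simp only [mU]; have := hM f; omega)
  simpa only [hweight] using hU

end Construction

lemma two_pow_dvd_two_mul_iff {k : ℕ} (hk : 1 ≤ k) (x : ℤ) :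
    (2 : ℤ) ^ k ∣ 2 * x ↔ (2 : ℤ) ^ (k - 1) ∣ x := by
  obtain ⟨j, rfl⟩ : ∃ j, k = j + 1 := ⟨k - 1, by omega⟩
  rw [pow_succ', Nat.add_sub_cancel, mul_dvd_mul_iff_left two_ne_zero]

lemma dvd_of_realizes_replicate_add_pair {k : ℕ} (hk : 2 ≤ k) {a b c : ℤ}
    (h : Realizes (ZMod 2) (Multiset.replicate (2 ^ k - 3) a + {b, c})) :
    (2 : ℤ) ^ (k - 1) ∣ a + b - c ∧ (2 : ℤ) ^ (k - 1) ∣ a - b + c ∧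
      (2 : ℤ) ^ (k - 1) ∣ b + c - a := by
  obtain ⟨n, m, U, V, φ, hφ⟩ := h
  have : Fintype U := Fintype.ofFinite U
  rw [projWeightChanges_eq_map_weightChange] at hφ
  have hcard : Fintype.card U = 2 ^ k := by
    have h4 : 4 ≤ 2 ^ k := le_trans (by norm_num) (Nat.pow_le_pow_right two_pos hk)
    have := congrArg Multiset.card hφ
    simp only [card_val, card_erase_of_mem (mem_univ _), card_univ, Multiset.card_map,
      Multiset.card_add, Multiset.card_replicate, Multiset.insert_eq_cons, Multiset.card_cons,
      Multiset.card_singleton] at this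
    omega
  obtain ⟨p, hp, q, hq, hpq, hgp, hgq, hga⟩ := exists_of_map_eq_replicate_add_pair hφ
  rw [mem_erase] at hp hq
  refine (forall_dvd_sgn_combination_iff hp.1 hq.1 hpq).mp fun h hh => ?_
  rw [← two_pow_dvd_two_mul_iff (by omega), ← walsh_eq_sgn_combination hp.1 hq.1 hpq
    (by simp [weightChange]) hgp hgq (fun v hv => hga v (mem_erase.mpr ⟨hv, mem_univ v⟩)) hh]
  exact_mod_cast hcard ▸ card_dvd_two_mul_walsh_weightChange φ h

lemma realizes_replicate_add_pair {k : ℕ} (hk : 2 ≤ k) {a b c : ℤ}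
    (hdvd : (2 : ℤ) ^ (k - 1) ∣ a + b - c ∧ (2 : ℤ) ^ (k - 1) ∣ a - b + c ∧
      (2 : ℤ) ^ (k - 1) ∣ b + c - a) :
    Realizes (ZMod 2) (Multiset.replicate (2 ^ k - 3) a + {b, c}) := by
  obtain ⟨j, rfl⟩ : ∃ j, k = j + 2 := ⟨k - 2, by omega⟩
  let p : Fin (j + 2) → ZMod 2 := Pi.single 0 1
  let q : Fin (j + 2) → ZMod 2 := Pi.single 1 1
  have hp : p ≠ 0 := by simp [p]
  have hq : q ≠ 0 := by simp [q]
  have hpq : p ≠ q := fun h => by simpa [p, q] using congrFun h 0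
  let g v := if v = 0 then 0 else if v = p then b else if v = q then c else a
  have hgp : g p = b := by simp [g, hp]
  have hgq : g q = c := by simp [g, hq, hpq.symm]
  have hga (v) (hv : v ≠ 0) (hvp : v ≠ p) (hvq : v ≠ q) : g v = a := by simp [g, hv, hvp, hvq]
  have hmap : (univ.erase 0).val.map g = Multiset.replicate (2 ^ (j + 2) - 3) a + {b, c} := by
    rw [map_eq_replicate_add_pair (by simpa using hp) (by simpa using hq) hpq hgp hgq
      fun v hv => hga v (mem_erase.mp hv).1]
    simp [card_erase_of_mem, Nat.sub_sub]
  rw [← hmap]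
  refine realizes_of_card_dvd_two_mul_walsh g (by simp [g]) fun h hh => ?_
  rw [walsh_eq_sgn_combination hp hq hpq (by simp [g]) hgp hgq hga hh]
  simpa [two_pow_dvd_two_mul_iff] using (forall_dvd_sgn_combination_iff hp hq hpq).mpr hdvd h hh

lemma mul_two_dvd_pair_sums_iff {m : ℤ} (hm : m ≠ 0) (A B C : ℤ) :
    (m * 2 ∣ m * A + m * B - m * C ∧ m * 2 ∣ m * A - m * B + m * C ∧
      m * 2 ∣ m * B + m * C - m * A) ↔ 2 ∣ A + B + C := by
  simp only [← mul_add, ← mul_sub, mul_dvd_mul_iff_left hm]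
  omega

lemma dvd_and_exactly_one_or_three_iff {k : ℕ} (hk : 2 ≤ k) (a b c : ℕ) :
    ((2 ^ (k - 2) ∣ a ∧ 2 ^ (k - 2) ∣ b ∧ 2 ^ (k - 2) ∣ c) ∧
        ((2 ^ (k - 1) ∣ a ∧ 2 ^ (k - 1) ∣ b ∧ 2 ^ (k - 1) ∣ c) ∨
         (2 ^ (k - 1) ∣ a ∧ ¬ 2 ^ (k - 1) ∣ b ∧ ¬ 2 ^ (k - 1) ∣ c) ∨
         (¬ 2 ^ (k - 1) ∣ a ∧ 2 ^ (k - 1) ∣ b ∧ ¬ 2 ^ (k - 1) ∣ c) ∨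
         (¬ 2 ^ (k - 1) ∣ a ∧ ¬ 2 ^ (k - 1) ∣ b ∧ 2 ^ (k - 1) ∣ c))) ↔
      (2 : ℤ) ^ (k - 1) ∣ a + b - c ∧ (2 : ℤ) ^ (k - 1) ∣ a - b + c ∧
        (2 : ℤ) ^ (k - 1) ∣ b + c - a := by
  obtain ⟨j, rfl⟩ : ∃ j, k = j + 2 := ⟨k - 2, by omega⟩
  simp only [show j + 2 - 2 = j by omega, show j + 2 - 1 = j + 1 by omega, pow_succ]
  have hm : (2 : ℤ) ^ j ≠ 0 := by positivity
  have hdvdN (X : ℕ) : 2 ^ j * 2 ∣ 2 ^ j * X ↔ 2 ∣ X := Nat.mul_dvd_mul_iff_left (by positivity)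
  constructor
  · rintro ⟨⟨⟨A, rfl⟩, ⟨B, rfl⟩, ⟨C, rfl⟩⟩, hpar⟩
    simp only [hdvdN] at hpar
    push_cast
    exact (mul_two_dvd_pair_sums_iff hm A B C).mpr (by omega)
  · rintro ⟨h₁, h₂, h₃⟩
    have hdiv (x : ℕ) {y z : ℤ} (hy : (2 : ℤ) ^ j * 2 ∣ y) (hz : (2 : ℤ) ^ j * 2 ∣ z)
        (hyz : y + z = 2 * x) : 2 ^ j ∣ x := by
      have hx := dvd_add hy hz
      rw [hyz, mul_comm _ (2 : ℤ)] at hx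
      exact_mod_cast (mul_dvd_mul_iff_left two_ne_zero).mp hx
    obtain ⟨A, rfl⟩ := hdiv a h₁ h₂ (by ring)
    obtain ⟨B, rfl⟩ := hdiv b h₁ h₃ (by ring)
    obtain ⟨C, rfl⟩ := hdiv c h₂ h₃ (by ring)
    push_cast at h₁ h₂ h₃
    have := (mul_two_dvd_pair_sums_iff hm A B C).mp ⟨h₁, h₂, h₃⟩
    simp only [hdvdN]
    exact ⟨⟨dvd_mul_right _ _, dvd_mul_right _ _, dvd_mul_right _ _⟩, by omega⟩

/-- the multiset of `2^k - 3` copies of `a` and one copy each of `b`, `c` is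
realized by an F₂-linear map iff `2^(k-2)` divides `a`, `b`, `c` and exactly 1 or exactly 3
of `a`, `b`, `c` are divisible by `2^(k-1)`. -/
theorem stmt_9 (k a b c : ℕ) (hk : 2 ≤ k) :
    Realizes (ZMod 2) (Multiset.replicate (2 ^ k - 3) (a : ℤ) + {(b : ℤ), (c : ℤ)}) ↔
      ((2 ^ (k - 2) ∣ a ∧ 2 ^ (k - 2) ∣ b ∧ 2 ^ (k - 2) ∣ c) ∧
        ((2 ^ (k - 1) ∣ a ∧ 2 ^ (k - 1) ∣ b ∧ 2 ^ (k - 1) ∣ c) ∨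
         (2 ^ (k - 1) ∣ a ∧ ¬ 2 ^ (k - 1) ∣ b ∧ ¬ 2 ^ (k - 1) ∣ c) ∨
         (¬ 2 ^ (k - 1) ∣ a ∧ 2 ^ (k - 1) ∣ b ∧ ¬ 2 ^ (k - 1) ∣ c) ∨
         (¬ 2 ^ (k - 1) ∣ a ∧ ¬ 2 ^ (k - 1) ∣ b ∧ 2 ^ (k - 1) ∣ c))) := by
  rw [dvd_and_exactly_one_or_three_iff hk]
  exact ⟨dvd_of_realizes_replicate_add_pair hk, realizes_replicate_add_pair hk⟩
end

section
/- Let q be a prime power, k a positive integer, and let S be a multiset of integers of size (q^k − 1)/(q − 1). For every vector π indexed by the points of PG(k−1, q) whose entries are a permutation of S, every entry of M_{k,q}^{-1} π is at least δ_q(S)/q^{k−1}. -/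
open Matrix

/-! Counting vectors in the kernels of one or two independent linear forms shows that every
point of `PG(k-1,q)` is non-orthogonal to `q^(k-1)` points and two distinct points are both
non-orthogonal to `(q-1) q^(k-2)` points; this gives
`M_{k,q}⁻¹ = q^(1-k) (q M_{k,q} - (q-1) J)`. Hence `q^(k-1) (M_{k,q}⁻¹ π)_p` is
`q Σ_{w ∈ A} π_w - (q-1) Σ_w π_w` for a set `A` of `q^(k-1)` points, and the entries of `π` on
`A` sum to at least the `q^(k-1)` smallest elements of `S`. -/

open Finset

section SortedSum

variable {α : Type*}

theorem List.sum_take_length_le_sum_of_sublist [AddCommMonoid α] [PartialOrder α]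
    [IsOrderedAddMonoid α] {l l' : List α} (hl : l.Pairwise (· ≤ ·)) (h : l'.Sublist l) :
    (l.take l'.length).sum ≤ l'.sum := by
  induction l generalizing l' with
  | nil => simp [List.sublist_nil.mp h]
  | cons a t ih =>
    obtain ⟨ha, ht⟩ := List.pairwise_cons.mp hl
    cases h with
    | cons _ h =>
      cases l' with
      | nil => simp
      | cons b l' =>
        have hab : a ≤ b := ha b (h.subset List.mem_cons_self)
        simpa using add_le_add hab (ih ht ((List.sublist_cons_self b l').trans h))
    | cons_cons _ h => simpa using add_le_add_right (ih ht h) a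

theorem Multiset.sum_take_sort_le_sum_of_le [AddCommMonoid α] [LinearOrder α]
    [IsOrderedAddMonoid α] {S T : Multiset α} (h : T ≤ S) :
    ((S.sort (· ≤ ·)).take (Multiset.card T)).sum ≤ T.sum := by
  have hsub : (T.sort (· ≤ ·)).Sublist (S.sort (· ≤ ·)) :=
    List.sublist_of_subperm_of_pairwise (by rwa [← Multiset.coe_le, Multiset.sort_eq,
      Multiset.sort_eq]) (Multiset.pairwise_sort _ _) (Multiset.pairwise_sort _ _)
  simpa [← Multiset.sum_coe, Multiset.sort_eq] using
    List.sum_take_length_le_sum_of_sublist (Multiset.pairwise_sort _ _) hsub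

end SortedSum

theorem splitDiff_eq (q k : ℕ) (S : Multiset ℤ) :
    splitDiff q k S = q * ((S.sort (· ≤ ·)).take (q ^ (k - 1))).sum - (q - 1) * S.sum := by
  have hsum : ((S.sort (· ≤ ·)).take (q ^ (k - 1))).sum
      + ((S.sort (· ≤ ·)).drop (q ^ (k - 1))).sum = S.sum := by
    rw [← List.sum_append, List.take_append_drop, ← Multiset.sum_coe, Multiset.sort_eq]
  rw [splitDiff, ← hsum]
  ring

theorem splitDiff_le_of_le {q k : ℕ} {S T : Multiset ℤ} (hT : T ≤ S)
    (hcard : Multiset.card T = q ^ (k - 1)) :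
    splitDiff q k S ≤ q * T.sum - (q - 1) * S.sum := by
  rw [splitDiff_eq, ← hcard]
  gcongr
  exact Multiset.sum_take_sort_le_sum_of_le hT

section Counting

variable {F : Type*} [Field F] [Fintype F] [DecidableEq F]
  {n : Type*} [Fintype n] [DecidableEq n]

theorem pow_card_mul_card_filter_mulVec_eq_zero {ι : Type*} [Fintype ι] {A : Matrix ι n F}
    (hA : LinearIndependent F A.row) :
    Fintype.card F ^ Fintype.card ι * #{u | A *ᵥ u = 0} = Fintype.card F ^ Fintype.card n := by
  have hdim := A.mulVecLin.finrank_range_add_finrank_ker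
  rw [← Matrix.rank, hA.rank_matrix, Module.finrank_fintype_fun_eq_card] at hdim
  have hker : #{u | A *ᵥ u = 0} = Nat.card (LinearMap.ker A.mulVecLin) := by
    rw [← Fintype.card_subtype, ← Nat.card_eq_fintype_card]
    rfl
  rw [hker, Module.natCard_eq_pow_finrank (K := F), Nat.card_eq_fintype_card, ← pow_add, hdim]

theorem card_mul_card_filter_dotProduct_eq_zero (v : Projectivization F (n → F)) :
    Fintype.card F * #{u | v.rep ⬝ᵥ u = 0} = Fintype.card F ^ Fintype.card n := by
  have hA : LinearIndependent F (Matrix.of fun _ : Unit => v.rep).row :=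
    linearIndependent_unique_iff.mpr v.rep_nonzero
  simpa [funext_iff, Matrix.mulVec] using pow_card_mul_card_filter_mulVec_eq_zero hA

theorem card_sq_mul_card_filter_dotProduct_eq_zero_and {v w : Projectivization F (n → F)}
    (hvw : v ≠ w) :
    Fintype.card F ^ 2 * #{u | v.rep ⬝ᵥ u = 0 ∧ w.rep ⬝ᵥ u = 0} =
      Fintype.card F ^ Fintype.card n := by
  have hA : LinearIndependent F (Matrix.of (Projectivization.rep ∘ ![v, w])).row :=
    Projectivization.independent_iff.mp ((Projectivization.independent_pair_iff_ne v w).mpr hvw)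
  simpa [funext_iff, Fin.forall_fin_two, Matrix.mulVec] using
    pow_card_mul_card_filter_mulVec_eq_zero hA

end Counting

theorem Projectivization.sum_eq_card_sub_one_smul_sum_rep {K V M : Type*} [Field K] [Fintype K]
    [AddCommGroup V] [Module K V] [Fintype V] [AddCommMonoid M] (g : V → M) (hg0 : g 0 = 0)
    (hg : ∀ (c : K) (u : V), c ≠ 0 → g (c • u) = g u) :
    ∑ u, g u = (Fintype.card K - 1) • ∑ p : Projectivization K V, g p.rep := by
  classical
  have hmk : ∀ u : {u : V // u ≠ 0}, g u = g (Projectivization.mk K u.1 u.2).rep := by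
    rintro ⟨u, hu⟩
    obtain ⟨c, hc⟩ := Projectivization.exists_smul_eq_mk_rep K u hu
    rw [← hc, Units.smul_def, hg _ u c.ne_zero]
  calc ∑ u, g u = ∑ u : {u : V // u ≠ 0}, g u := by
        rw [← Fintype.sum_subtype_add_sum_subtype (· ≠ 0) g,
          Fintype.sum_eq_zero (fun u : {u : V // ¬u ≠ 0} => g u) (fun u => by
            rw [not_not.mp u.2, hg0]), add_zero]
    _ = ∑ x : Projectivization K V × Kˣ, g x.1.rep :=
        Fintype.sum_equiv (Projectivization.nonZeroEquivProjectivizationProdUnits K V) _ _ hmk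
    _ = (Fintype.card K - 1) • ∑ p : Projectivization K V, g p.rep := by
        rw [Fintype.sum_prod_type, Finset.smul_sum]
        simp [Fintype.card_units]

theorem Projectivization.card_sub_one_mul_card_filter_rep {K V : Type*} [Field K] [Fintype K]
    [AddCommGroup V] [Module K V] [Fintype V] (P : V → Prop) [DecidablePred P] (hP0 : ¬ P 0)
    (hP : ∀ (c : K) (u : V), c ≠ 0 → (P (c • u) ↔ P u)) :
    (Fintype.card K - 1) * #{p : Projectivization K V | P p.rep} = #{u | P u} := by
  rw [Finset.card_filter, Finset.card_filter,
    sum_eq_card_sub_one_smul_sum_rep (fun u => if P u then 1 else 0) (by simp [hP0])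
      (fun c u hc => if_congr (hP c u hc) rfl rfl), smul_eq_mul]

theorem pos_of_projectivization {K : Type*} [DivisionRing K] {k : ℕ}
    (v : Projectivization K (Fin k → K)) : 0 < k := by
  rcases Nat.eq_zero_or_pos k with rfl | hk
  · exact (IsEmpty.false v).elim
  · exact hk

section Mkq

variable {F : Type} [Field F] [Fintype F] [DecidableEq F] {k : ℕ}

local notation "q" => Fintype.card F

open scoped LinearAlgebra.Projectivization

theorem card_filter_dotProduct_rep_ne_zero (v : ℙ F (Fin k → F)) :
    #{w : ℙ F (Fin k → F) | v.rep ⬝ᵥ w.rep ≠ 0} = q ^ (k - 1) := by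
  obtain ⟨m, rfl⟩ := Nat.exists_eq_add_one_of_ne_zero (pos_of_projectivization v).ne'
  have hq : 1 < q := Fintype.one_lt_card
  have hzero := card_mul_card_filter_dotProduct_eq_zero v
  have hcompl := card_filter_add_card_filter_not (s := univ)
    (fun u : Fin (m + 1) → F => v.rep ⬝ᵥ u = 0)
  have hproj := Projectivization.card_sub_one_mul_card_filter_rep (K := F)
    (fun u : Fin (m + 1) → F => v.rep ⬝ᵥ u ≠ 0) (by simp) (fun c u hc => by simp [hc])
  simp only [Fintype.card_fin, card_univ, Fintype.card_fun, pow_succ] at hzero hcompl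
  simp only [Nat.add_sub_cancel]
  have hX : #{u | v.rep ⬝ᵥ u = 0} = q ^ m :=
    Nat.eq_of_mul_eq_mul_left (Nat.zero_lt_of_lt hq) (hzero.trans (mul_comm _ _))
  apply Nat.eq_of_mul_eq_mul_left (Nat.sub_pos_of_lt hq)
  rw [hproj, Nat.sub_mul, one_mul, mul_comm]
  simp only [ne_eq]
  omega

theorem card_mul_card_filter_dotProduct_rep_ne_zero_and {v w : ℙ F (Fin k → F)}
    (hvw : v ≠ w) :
    q * #{p : ℙ F (Fin k → F) | v.rep ⬝ᵥ p.rep ≠ 0 ∧ p.rep ⬝ᵥ w.rep ≠ 0} =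
      (q - 1) * q ^ (k - 1) := by
  obtain ⟨m, rfl⟩ := Nat.exists_eq_add_one_of_ne_zero (pos_of_projectivization v).ne'
  have hq : 1 < q := Fintype.one_lt_card
  have hv := card_mul_card_filter_dotProduct_eq_zero v
  have hw := card_mul_card_filter_dotProduct_eq_zero w
  have hvw' := card_sq_mul_card_filter_dotProduct_eq_zero_and hvw
  have hunion : #{u : Fin (m + 1) → F | v.rep ⬝ᵥ u = 0 ∨ w.rep ⬝ᵥ u = 0}
      + #{u : Fin (m + 1) → F | v.rep ⬝ᵥ u = 0 ∧ w.rep ⬝ᵥ u = 0}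
      = #{u : Fin (m + 1) → F | v.rep ⬝ᵥ u = 0}
        + #{u : Fin (m + 1) → F | w.rep ⬝ᵥ u = 0} := by
    rw [filter_or, filter_and]
    exact card_union_add_card_inter _ _
  have hcompl := card_filter_add_card_filter_not (s := univ)
    (fun u : Fin (m + 1) → F => v.rep ⬝ᵥ u = 0 ∨ w.rep ⬝ᵥ u = 0)
  have hproj := Projectivization.card_sub_one_mul_card_filter_rep (K := F)
    (fun u : Fin (m + 1) → F => v.rep ⬝ᵥ u ≠ 0 ∧ u ⬝ᵥ w.rep ≠ 0) (by simp)
    (fun c u hc => by simp [hc])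
  have hcompl' : #{u | v.rep ⬝ᵥ u ≠ 0 ∧ u ⬝ᵥ w.rep ≠ 0} =
      #{u | ¬(v.rep ⬝ᵥ u = 0 ∨ w.rep ⬝ᵥ u = 0)} := by
    congr 1
    exact filter_congr fun u _ => by rw [not_or, dotProduct_comm u]
  simp only [Fintype.card_fin, card_univ, Fintype.card_fun, Nat.add_sub_cancel]
    at hv hw hvw' hcompl ⊢
  have hX1 : #{u : Fin (m + 1) → F | v.rep ⬝ᵥ u = 0} = q ^ m :=
    Nat.eq_of_mul_eq_mul_left (Nat.zero_lt_of_lt hq) (hv.trans (pow_succ' _ _))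
  have hX2 : #{u : Fin (m + 1) → F | w.rep ⬝ᵥ u = 0} = q ^ m :=
    Nat.eq_of_mul_eq_mul_left (Nat.zero_lt_of_lt hq) (hw.trans (pow_succ' _ _))
  have hX12 : q * #{u : Fin (m + 1) → F | v.rep ⬝ᵥ u = 0 ∧ w.rep ⬝ᵥ u = 0} = q ^ m :=
    Nat.eq_of_mul_eq_mul_left (Nat.zero_lt_of_lt hq)
      (by rw [← mul_assoc, ← sq, hvw', pow_succ'])
  -- inclusion-exclusion: `q^k - 2 q^(k-1) + q^(k-2)` vectors are non-orthogonal to both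
  apply Nat.eq_of_mul_eq_mul_left (Nat.sub_pos_of_lt hq)
  rw [← hcompl'] at hcompl
  zify [hq.le] at hproj hcompl hunion hX12 hX1 hX2 ⊢
  linear_combination (q : ℤ) * hproj + (q : ℤ) * hcompl - (q : ℤ) * hunion + hX12
    - (q : ℤ) * hX1 - (q : ℤ) * hX2

theorem Mkq_apply (v w : ℙ F (Fin k → F)) :
    Mkq F k v w = if v.rep ⬝ᵥ w.rep ≠ 0 then 1 else 0 := by
  rw [Mkq, of_apply, ite_not]

theorem Mkq_mul_apply (A : Matrix (ℙ F (Fin k → F)) (ℙ F (Fin k → F)) ℝ)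
    (v w : ℙ F (Fin k → F)) :
    (Mkq F k * A) v w = ∑ p with v.rep ⬝ᵥ p.rep ≠ 0, A p w := by
  simp [Matrix.mul_apply, Mkq_apply, sum_filter]

theorem Mkq_mulVec_apply (x : ℙ F (Fin k → F) → ℝ) (v : ℙ F (Fin k → F)) :
    (Mkq F k *ᵥ x) v = ∑ w with v.rep ⬝ᵥ w.rep ≠ 0, x w := by
  rw [mulVec, dotProduct, sum_filter]
  simp only [Mkq_apply, ite_mul, one_mul, zero_mul]

theorem Mkq_mul_Mkq_apply (v w : ℙ F (Fin k → F)) :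
    (Mkq F k * Mkq F k) v w =
      #{p : ℙ F (Fin k → F) | v.rep ⬝ᵥ p.rep ≠ 0 ∧ p.rep ⬝ᵥ w.rep ≠ 0} := by
  rw [Mkq_mul_apply]
  simp only [Mkq_apply, sum_boole, filter_filter]

theorem Mkq_mul_eq_smul_one :
    Mkq F k * ((q : ℝ) • Mkq F k - ((q : ℝ) - 1) • Matrix.of fun _ _ => 1) =
      ((q : ℝ) ^ (k - 1)) • 1 := by
  ext v w
  rw [Matrix.mul_sub, Matrix.mul_smul, Matrix.mul_smul, Matrix.sub_apply, Matrix.smul_apply,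
    Matrix.smul_apply, Mkq_mul_Mkq_apply, Mkq_mul_apply, Matrix.smul_apply, one_apply]
  simp only [of_apply, sum_const, nsmul_eq_mul, mul_one, smul_eq_mul,
    card_filter_dotProduct_rep_ne_zero]
  by_cases hvw : v = w
  · subst hvw
    have hdiag : #{p : ℙ F (Fin k → F) | v.rep ⬝ᵥ p.rep ≠ 0 ∧ p.rep ⬝ᵥ v.rep ≠ 0} =
        #{p : ℙ F (Fin k → F) | v.rep ⬝ᵥ p.rep ≠ 0} := by
      simp_rw [dotProduct_comm _ v.rep, and_self]
    rw [hdiag, card_filter_dotProduct_rep_ne_zero, if_pos rfl]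
    push_cast
    ring
  · have hoff := card_mul_card_filter_dotProduct_rep_ne_zero_and hvw
    rw [if_neg hvw]
    rify [Fintype.card_pos] at hoff
    push_cast
    linear_combination hoff

theorem inv_Mkq : (Mkq F k)⁻¹ =
    ((q : ℝ) ^ (k - 1))⁻¹ • ((q : ℝ) • Mkq F k - ((q : ℝ) - 1) • Matrix.of fun _ _ => 1) := by
  apply Matrix.inv_eq_right_inv
  rw [Matrix.mul_smul, Mkq_mul_eq_smul_one, smul_smul, inv_mul_cancel₀ (by positivity), one_smul]

theorem inv_Mkq_mulVec_apply (x : ℙ F (Fin k → F) → ℝ) (v : ℙ F (Fin k → F)) :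
    ((Mkq F k)⁻¹ *ᵥ x) v =
      (q * ∑ w with v.rep ⬝ᵥ w.rep ≠ 0, x w - (q - 1) * ∑ w, x w) / (q : ℝ) ^ (k - 1) := by
  rw [inv_Mkq, smul_mulVec, sub_mulVec, smul_mulVec, smul_mulVec]
  simp only [Pi.smul_apply, Pi.sub_apply, smul_eq_mul, Mkq_mulVec_apply]
  simp [mulVec, dotProduct, div_eq_inv_mul]

end Mkq

theorem stmt_13_general (q k : ℕ) (S : Multiset ℤ)
    (F : Type) [Field F] [Fintype F] [DecidableEq F] (hF : Fintype.card F = q)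
    (π : Projectivization F (Fin k → F) → ℤ) (hπ : Finset.univ.val.map π = S) :
    ∀ p, (splitDiff q k S : ℝ) / (q : ℝ) ^ (k - 1) ≤
      ((Mkq F k)⁻¹ *ᵥ fun w => (π w : ℝ)) p := by
  subst hF hπ
  intro p
  set A := ({w | p.rep ⬝ᵥ w.rep ≠ 0} : Finset (Projectivization F (Fin k → F)))
  have hA : splitDiff (Fintype.card F) k (univ.val.map π) ≤
      Fintype.card F * ∑ w ∈ A, π w - (Fintype.card F - 1) * ∑ w, π w :=
    splitDiff_le_of_le (Multiset.map_le_map (val_le_iff.mpr (subset_univ A)))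
      (by rw [Multiset.card_map, card_val, card_filter_dotProduct_rep_ne_zero])
  rw [inv_Mkq_mulVec_apply]
  gcongr
  exact_mod_cast hA

/-- for every vector `π` indexed by the points of `PG(k-1,q)` whose entries
are a permutation of `S`, every entry of `M_{k,q}⁻¹ π` is at least `δ_q(S)/q^(k-1)`. -/
theorem stmt_13 (q k : ℕ) (hq : IsPrimePow q) (hk : 0 < k) (S : Multiset ℤ)
    (hcard : Multiset.card S = (q ^ k - 1) / (q - 1))
    (F : Type) [Field F] [Fintype F] [DecidableEq F] (hF : Fintype.card F = q)
    (π : Projectivization F (Fin k → F) → ℤ) (hπ : Finset.univ.val.map π = S) :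
    ∀ p, (splitDiff q k S : ℝ) / (q : ℝ) ^ (k - 1) ≤
      ((Mkq F k)⁻¹ *ᵥ fun w => (π w : ℝ)) p :=
  stmt_13_general q k S F hF π hπ
end
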